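/- Let Q be a quaternion division algebra over F. If P(x) ∈ Q[x] has spherical roots a₁, …, aₙ lying in pairwise distinct conjugacy classes, then P(x) is right-divisible in Q[x] by the product f₁(x)···fₙ(x) of the minimal polynomials fᵢ(x) ∈ F[x] of the aᵢ. -/

import Mathlib

open Polynomial

/-- `q` is a spherical root of `P`: `q` is non-central (not in `F`) and every conjugate
of `q` is a right root of `P`. -/
def IsSphericalRoot (F : Type*) {Q : Type*} [Field F] [DivisionRing Q] [Algebra F Q]
    (P : Q[X]) (q : Q) : Prop :=
  (¬∃ r : F, q = algebraMap F Q r) ∧ ∀ g : Q, g ≠ 0 → P.eval (g * q * g⁻¹) = 0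

/-!
A non-central `a` has a quadratic minimal polynomial `fₐ`: its centralizer `C` contains `F[a]`,
and `C ∩ C w = 0` for `w ∉ C`, so `2 dim C ≤ 4`. Every root `b` of `fₐ = X² + t X + n` is
conjugate to `a`, because `y ↦ a y + y b + t y` intertwines `b` with `a` and is nonzero at
`y = 1` or at `y = w`. Since `fₐ` has central coefficients, `P = G fₐ + R` with `deg R ≤ 1`,
and `R` vanishes at the two distinct conjugates `a` and `w a w⁻¹`, so `R = 0`. The other
spherical roots are not conjugate to `a`, so `fₐ` does not vanish on their conjugacy classes
and they are spherical roots of `G`; induct on `n`.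
-/

section

variable {F Q : Type*} [Field F] [DivisionRing Q] [Algebra F Q]

open Module

lemma two_mul_finrank_centralizer_le [FiniteDimensional F Q] {s : Set Q} {w : Q}
    (hw : w ∉ Subalgebra.centralizer F s) :
    2 * finrank F (Subalgebra.centralizer F s) ≤ finrank F Q := by
  set C := Subalgebra.toSubmodule (Subalgebra.centralizer F s)
  have hw0 : w ≠ 0 := fun h => hw (h ▸ zero_mem _)
  have hinj : Function.Injective (LinearMap.mulRight F w) := mul_left_injective₀ hw0
  set Cw := C.map (LinearMap.mulRight F w)
  have hdisj : C ⊓ Cw = ⊥ := by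
    refine (Submodule.eq_bot_iff _).2 fun x ⟨hxC, k, hkC, hkx⟩ => ?_
    by_contra hx
    have hk : k ≠ 0 := by rintro rfl; simp [← hkx] at hx
    refine hw ?_
    have hwx : w = k⁻¹ * x := by simp [← hkx, hk]
    exact hwx ▸ Subalgebra.mul_mem _ (Set.inv_mem_centralizer₀ hkC) hxC
  have hCw : finrank F Cw = finrank F C :=
    (LinearEquiv.finrank_eq (Submodule.equivMapOfInjective _ hinj C)).symm
  have := Submodule.finrank_sup_add_finrank_inf_eq C Cw
  rw [hdisj, finrank_bot, hCw] at this
  have := Submodule.finrank_le (C ⊔ Cw)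
  change 2 * finrank F C ≤ _
  omega

lemma natDegree_minpoly_le_finrank_centralizer [FiniteDimensional F Q] (a : Q) :
    (minpoly F a).natDegree ≤ finrank F (Subalgebra.centralizer F {a}) := by
  have hpow : ∀ i : ℕ, a ^ i ∈ Subalgebra.centralizer F {a} := fun i =>
    Subalgebra.pow_mem _ (Subalgebra.mem_centralizer_iff F |>.2 fun _ hg => hg ▸ rfl) i
  have hli : LinearIndependent F fun i : Fin (minpoly F a).natDegree =>
      (⟨a ^ (i : ℕ), hpow i⟩ : Subalgebra.centralizer F {a}) :=
    .of_comp (Subalgebra.centralizer F {a}).val.toLinearMap (linearIndependent_pow a)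
  simpa using hli.fintype_card_le_finrank

lemma natDegree_minpoly_eq_two [FiniteDimensional F Q] (hdim : finrank F Q = 4) {a w : Q}
    (hw : a * w ≠ w * a) : (minpoly F a).natDegree = 2 := by
  have hnc : w ∉ Subalgebra.centralizer F {a} := fun h =>
    hw ((Subalgebra.mem_centralizer_iff F).1 h a rfl)
  have h2 : 2 ≤ (minpoly F a).natDegree := by
    refine (minpoly.two_le_natDegree_iff (.of_finite F a)).2 ?_
    rintro ⟨r, rfl⟩
    exact hw (Algebra.commutes r w)
  have := two_mul_finrank_centralizer_le hnc
  have := natDegree_minpoly_le_finrank_centralizer (F := F) a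
  omega

lemma commute_map_algebraMap (f : F[X]) (G : Q[X]) : Commute (f.map (algebraMap F Q)) G := by
  induction f using Polynomial.induction_on' with
  | add p q hp hq => rw [Polynomial.map_add]; exact hp.add_left hq
  | monomial n r =>
    rw [map_monomial, ← C_mul_X_pow_eq_monomial, ← Polynomial.algebraMap_apply]
    exact (Algebra.commute_algebraMap_left r G).mul_left (commute_X_pow G n)

lemma eval_mul_map_algebraMap (G : Q[X]) (f : F[X]) (x : Q) :
    (G * f.map (algebraMap F Q)).eval x = G.eval x * aeval x f := by
  rw [aeval_def, ← eval_map]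
  exact eval₂_mul_noncomm _ _ fun k => by
    simpa using Algebra.commute_algebraMap_left (f.coeff k) x

lemma aeval_conj (f : F[X]) (x : Q) {g : Q} (hg : g ≠ 0) :
    aeval (g * x * g⁻¹) f = g * aeval x f * g⁻¹ := by
  simpa [ConjAct.units_smul_def] using
    aeval_algHom_apply (MulSemiringAction.toAlgHom F Q (ConjAct.toConjAct (Units.mk0 g hg))) x f

lemma mul_add_mul_add_eq_zero_of_aeval {f : F[X]} (hf : f.Monic) (hd : f.natDegree = 2) {x : Q}
    (hx : aeval x f = 0) :
    x * x + algebraMap F Q (f.coeff 1) * x + algebraMap F Q (f.coeff 0) = 0 := by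
  have hsum := hf.as_sum
  rw [hd] at hsum
  rw [← hx, hsum]
  simp [Finset.sum_range_succ, sq]
  abel

lemma eq_zero_of_natDegree_le_one_of_eval_eq_zero {D : Type*} [DivisionRing D] {p : D[X]}
    (hp : p.natDegree ≤ 1) {x y : D} (hxy : x ≠ y) (hx : p.eval x = 0) (hy : p.eval y = 0) :
    p = 0 := by
  rw [eq_X_add_C_of_natDegree_le_one hp] at hx hy ⊢
  simp only [eval_add, eval_C_mul, eval_C, eval_X] at hx hy
  have h1 : p.coeff 1 = 0 := by
    have : p.coeff 1 * (x - y) = 0 := by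
      rw [mul_sub, ← add_sub_add_right_eq_sub, hx, hy, sub_self]
    exact (mul_eq_zero.1 this).resolve_right (sub_ne_zero.2 hxy)
  rw [h1, zero_mul, zero_add] at hx
  rw [h1, hx, C_0, zero_mul, zero_add]

lemma semiconjBy_of_sq_add_mul_add_eq_zero {R : Type*} [Ring R] {a b t n : R}
    (ht : ∀ x, Commute t x) (hn : ∀ x, Commute n x)
    (ha : a * a + t * a + n = 0) (hb : b * b + t * b + n = 0) (y : R) :
    SemiconjBy (a * y + y * b + t * y) b a := by
  have ha' : a * a + a * t + n = 0 := by rwa [← (ht a).eq]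
  calc (a * y + y * b + t * y) * b = y * (b * b + t * b + n) + (a * y * b - y * n) := by
        rw [(ht y).eq]; noncomm_ring
    _ = (a * a + a * t + n) * y + (a * y * b - y * n) := by rw [ha', hb]; simp
    _ = a * (a * y + y * b + t * y) := by rw [← (hn y).eq]; noncomm_ring

lemma exists_conj_of_aeval_eq_zero {f : F[X]} (hf : f.Monic) (hd : f.natDegree = 2)
    {a b w : Q} (ha : aeval a f = 0) (hb : aeval b f = 0) (hw : a * w ≠ w * a) :
    ∃ h : Q, h ≠ 0 ∧ b = h * a * h⁻¹ := by
  set t := algebraMap F Q (f.coeff 1)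
  have ht : ∀ x, Commute t x := Algebra.commute_algebraMap_left _
  have hφ := semiconjBy_of_sq_add_mul_add_eq_zero ht (Algebra.commute_algebraMap_left _)
    (mul_add_mul_add_eq_zero_of_aeval hf hd ha) (mul_add_mul_add_eq_zero_of_aeval hf hd hb)
  obtain ⟨y, hy⟩ : ∃ y, a * y + y * b + t * y ≠ 0 := by
    by_cases h1 : a * 1 + 1 * b + t * 1 = 0
    · have hb' : b = -a - t := by
        simp only [mul_one, one_mul] at h1
        rw [← sub_eq_zero, ← h1]
        abel
      refine ⟨w, fun h => hw (sub_eq_zero.1 ?_)⟩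
      rw [← h, hb', (ht w).eq]
      noncomm_ring
    · exact ⟨1, h1⟩
  refine ⟨_, inv_ne_zero hy, ?_⟩
  rw [inv_inv, mul_assoc, ← (hφ y).eq, ← mul_assoc, inv_mul_cancel₀ hy, one_mul]

lemma exists_eq_mul_map_minpoly [FiniteDimensional F Q] (hdim : finrank F Q = 4) {P : Q[X]}
    {a w : Q} (hw : a * w ≠ w * a) (hP : ∀ g : Q, g ≠ 0 → P.eval (g * a * g⁻¹) = 0) :
    ∃ G : Q[X], P = G * (minpoly F a).map (algebraMap F Q) := by
  set f := (minpoly F a).map (algebraMap F Q)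
  have hmon : f.Monic := (minpoly.monic (.of_finite F a)).map _
  have hdeg : f.natDegree = 2 := by
    rw [natDegree_map]; exact natDegree_minpoly_eq_two hdim hw
  have hdiv : P = P %ₘ f + P /ₘ f * f := by
    rw [← (commute_map_algebraMap _ _).eq, modByMonic_add_div]
  have hR : ∀ g : Q, g ≠ 0 → (P %ₘ f).eval (g * a * g⁻¹) = 0 := fun g hg =>
    calc (P %ₘ f).eval (g * a * g⁻¹) = P.eval (g * a * g⁻¹) := by
          conv_rhs => rw [hdiv]
          simp [f, eval_mul_map_algebraMap, aeval_conj _ _ hg]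
      _ = 0 := hP g hg
  have hw0 : w ≠ 0 := by rintro rfl; simp at hw
  have hne : a ≠ w * a * w⁻¹ := fun h => hw (eq_mul_inv_iff_mul_eq₀ hw0 |>.1 h)
  have hR0 : P %ₘ f = 0 := by
    refine eq_zero_of_natDegree_le_one_of_eval_eq_zero ?_ hne (by simpa using hR 1 one_ne_zero)
      (hR w hw0)
    have := natDegree_modByMonic_lt P hmon (by rintro h; simp [h] at hdeg)
    omega
  exact ⟨P /ₘ f, by simpa [hR0] using hdiv⟩

lemma IsSphericalRoot.of_mul_map_minpoly [FiniteDimensional F Q] (hdim : finrank F Q = 4)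
    {G : Q[X]} {a b w : Q} (hw : a * w ≠ w * a)
    (hb : IsSphericalRoot F (G * (minpoly F a).map (algebraMap F Q)) b)
    (hab : ¬∃ q : Q, q ≠ 0 ∧ b = q * a * q⁻¹) : IsSphericalRoot F G b := by
  refine ⟨hb.1, fun g hg => ?_⟩
  have hGf := hb.2 g hg
  rw [eval_mul_map_algebraMap] at hGf
  refine (mul_eq_zero.1 hGf).resolve_right fun hroot => hab ?_
  obtain ⟨h, hh, hconj⟩ := exists_conj_of_aeval_eq_zero (minpoly.monic (.of_finite F a))
    (natDegree_minpoly_eq_two hdim hw) (minpoly.aeval F a) hroot hw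
  refine ⟨g⁻¹ * h, mul_ne_zero (inv_ne_zero hg) hh, ?_⟩
  calc b = g⁻¹ * (g * b * g⁻¹) * g := by simp [mul_assoc, hg]
    _ = g⁻¹ * h * a * (g⁻¹ * h)⁻¹ := by rw [hconj]; simp [mul_assoc]

end

/-- If `P(x)` over a quaternion division algebra has spherical roots `a₁, …, aₙ` in
pairwise distinct conjugacy classes, then `P` is right-divisible by the product of their
minimal polynomials over `F`. -/
theorem stmt13 {F Q : Type*} [Field F] [DivisionRing Q] [Algebra F Q]
    [FiniteDimensional F Q] (hdim : Module.finrank F Q = 4)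
    (hcent : ∀ z : Q, (∀ w : Q, z * w = w * z) → ∃ r : F, z = algebraMap F Q r)
    (P : Q[X]) (n : ℕ) (a : Fin n → Q)
    (hsph : ∀ i, IsSphericalRoot F P (a i))
    (hpair : ∀ i j, i ≠ j → ¬∃ q : Q, q ≠ 0 ∧ a j = q * a i * q⁻¹) :
    ∃ G : Q[X], P = G * (∏ i, minpoly F (a i)).map (algebraMap F Q) := by
  induction n generalizing P with
  | zero => exact ⟨P, by simp⟩
  | succ n ih =>
    obtain ⟨w, hw⟩ : ∃ w, a (Fin.last n) * w ≠ w * a (Fin.last n) := by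
      by_contra! h
      exact (hsph (Fin.last n)).1 (hcent _ h)
    obtain ⟨G, rfl⟩ := exists_eq_mul_map_minpoly hdim hw (hsph (Fin.last n)).2
    obtain ⟨G', rfl⟩ := ih G (fun i => a i.castSucc)
      (fun i => (hsph _).of_mul_map_minpoly hdim hw (hpair _ _ (Fin.castSucc_ne_last i).symm))
      (fun i j hij => hpair _ _ (Fin.castSucc_injective n |>.ne hij))
    exact ⟨G', by rw [Fin.prod_univ_castSucc, Polynomial.map_mul, mul_assoc]⟩
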